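/- arXiv:math/0006006 — 7 statements merged into one kernel-verified Lean document; each statement's English description precedes it below -/
import Mathlib

section
/- For a composition η = (η_1,...,η_N) of nonnegative integers and defining η̄_i := α·η_i − #{k < i : η_k ≥ η_i} − #{k > i : η_k > η_i}, one has for the composition Φη := (η_2,...,η_N, η_1+1) the identities (Φη)̄_i = η̄_{i+1} for 1 ≤ i ≤ N−1 and (Φη)̄_N = η̄_1 + α. -/
/-!
Order the positions `k : Fin N` by decreasing part `η k`, ties broken by increasing `k`. The
correction term of `η̄_i` counts the positions ranked above `i`, and the ranking is the numeric
order of the key `N * η k + (N - k)`. Under `Φ` every key moves one position to the left (cyclically)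
and grows by exactly one: the new last key `N * (η 0 + 1) + 1` exceeds the old first key
`N * η 0 + N` by one. So the ranking is merely rotated, and only the last part of `Φη` grows,
contributing `α`.
-/

/-- The eigenvalue `η̄_i = α η_i − #{k < i : η_k ≥ η_i} − #{k > i : η_k > η_i}`. -/
noncomputable def ebar {N : ℕ} (α : ℝ) (η : Fin N → ℕ) (i : Fin N) : ℝ :=
  α * (η i : ℝ) -
    ((Finset.univ.filter fun k : Fin N => k < i ∧ η i ≤ η k).card : ℝ) -
    ((Finset.univ.filter fun k : Fin N => i < k ∧ η i < η k).card : ℝ)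

/-- The raising operation on compositions: `Φη = (η_2, …, η_N, η_1 + 1)`. -/
def PhiComp {N : ℕ} (η : Fin N → ℕ) : Fin N → ℕ := fun i =>
  if h : (i : ℕ) + 1 < N then η ⟨(i : ℕ) + 1, h⟩ else η ⟨0, i.pos⟩ + 1

open Finset

section

variable {N : ℕ}

def rankKey (η : Fin N → ℕ) (k : Fin N) : ℕ := N * η k + (N - k)

lemma rankKey_lt_rankKey_iff (η : Fin N → ℕ) (i k : Fin N) :
    rankKey η i < rankKey η k ↔ η i < η k ∨ (η i = η k ∧ k < i) := by
  have hi := i.isLt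
  have hk := k.isLt
  rw [rankKey, rankKey, Fin.lt_def]
  rcases lt_trichotomy (η i) (η k) with h | h | h
  · have : N * η i + N ≤ N * η k := by nlinarith
    omega
  · rw [h]; omega
  · have : N * η k + N ≤ N * η i := by nlinarith
    omega

lemma ebar_eq_sub_card_rankKey_lt (α : ℝ) (η : Fin N → ℕ) (i : Fin N) :
    ebar α η i = α * η i - #{k | rankKey η i < rankKey η k} := by
  have hdisj : Disjoint ({k | k < i ∧ η i ≤ η k} : Finset (Fin N))
      ({k | i < k ∧ η i < η k} : Finset (Fin N)) :=
    disjoint_filter.2 fun k _ hlt hgt => lt_asymm hlt.1 hgt.1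
  have hsplit : #{k | rankKey η i < rankKey η k} =
      #{k | k < i ∧ η i ≤ η k} + #{k | i < k ∧ η i < η k} := by
    rw [← card_union_of_disjoint hdisj]
    congr 1
    ext k
    simp only [mem_filter, mem_union, mem_univ, true_and, rankKey_lt_rankKey_iff]
    grind
  rw [ebar, hsplit]
  push_cast
  ring

lemma val_finRotate (i : Fin N) :
    (finRotate N i : ℕ) = if (i : ℕ) + 1 < N then (i : ℕ) + 1 else 0 := by
  obtain ⟨n, rfl⟩ := Nat.exists_eq_add_one.mpr i.pos
  rw [coe_finRotate]
  simp only [Fin.ext_iff, Fin.val_last]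
  split_ifs <;> omega

lemma phiComp_apply (η : Fin N → ℕ) (i : Fin N) :
    PhiComp η i = η (finRotate N i) + if (i : ℕ) + 1 < N then 0 else 1 := by
  have hrot := val_finRotate i
  unfold PhiComp
  split_ifs at hrot ⊢
  · exact congrArg η (Fin.ext hrot.symm)
  · exact congrArg (η · + 1) (Fin.ext hrot.symm)

lemma rankKey_phiComp (η : Fin N → ℕ) (k : Fin N) :
    rankKey (PhiComp η) k = rankKey η (finRotate N k) + 1 := by
  have hrot := val_finRotate k
  have hk := k.isLt
  rw [rankKey, rankKey, phiComp_apply]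
  split_ifs at hrot ⊢ <;> rw [hrot, mul_add] <;> omega

lemma ebar_phiComp (α : ℝ) (η : Fin N → ℕ) (i : Fin N) :
    ebar α (PhiComp η) i = ebar α η (finRotate N i) + if (i : ℕ) + 1 < N then 0 else α := by
  have hcount : #{k | rankKey (PhiComp η) i < rankKey (PhiComp η) k} =
      #{k | rankKey η (finRotate N i) < rankKey η k} :=
    card_equiv (finRotate N) fun k => by simp [rankKey_phiComp]
  rw [ebar_eq_sub_card_rankKey_lt, ebar_eq_sub_card_rankKey_lt, hcount, phiComp_apply]
  split_ifs <;> push_cast <;> ring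

end

theorem stmt_0 (N : ℕ) (hN : 1 ≤ N) (α : ℝ) (η : Fin N → ℕ) :
    (∀ i : Fin N, ∀ h : (i : ℕ) + 1 < N,
      ebar α (PhiComp η) i = ebar α η ⟨(i : ℕ) + 1, h⟩) ∧
    ebar α (PhiComp η) ⟨N - 1, by omega⟩ = ebar α η ⟨0, by omega⟩ + α := by
  refine ⟨fun i h => ?_, ?_⟩
  · rw [ebar_phiComp, if_pos h, add_zero]
    exact congrArg _ (Fin.ext (by rw [val_finRotate, if_pos h]))
  · have hlast : ¬(N - 1) + 1 < N := by omega
    rw [ebar_phiComp, if_neg hlast]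
    congr 2
    exact Fin.ext (by rw [val_finRotate, if_neg hlast])
end

section
/- Let η be a partition (weakly decreasing composition) and ν a partition in ℕ^N. Then ν ≼ η (as defined via: there exists π ∈ S_N with ν_i < η_{π(i)} for i < π(i) and ν_i ≤ η_{π(i)} for i ≥ π(i)) if and only if ν_i ≤ η_i for all i. -/
/-!
If `ν ≼ η` via `π`, then `ν i ≤ η (π i)` for all `i`. By pigeonhole, `π` cannot map all of
`{0, …, i}` into `{0, …, i - 1}`, so some `j ≤ i` has `i ≤ π j`, and monotonicity gives
`ν i ≤ ν j ≤ η (π j) ≤ η i`. Conversely, the identity permutation witnesses `ν ≼ η`.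
-/

/-- The partial order `≼` on compositions: `ν ≼ η` iff there exists a permutation `π`
with `ν_i < η_{π(i)}` for `i < π(i)` and `ν_i ≤ η_{π(i)}` for `i ≥ π(i)`. -/
def Preceq {N : ℕ} (ν η : Fin N → ℕ) : Prop :=
  ∃ π : Equiv.Perm (Fin N), ∀ i : Fin N,
    (i < π i → ν i < η (π i)) ∧ (π i ≤ i → ν i ≤ η (π i))

theorem Fin.exists_le_le_apply_of_injective {n : ℕ} {f : Fin n → Fin n}
    (hf : Function.Injective f) (i : Fin n) : ∃ j ≤ i, i ≤ f j := by
  by_contra! h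
  have hsub : (Finset.Iic i).image f ⊆ Finset.Iio i := by
    simpa [Finset.subset_iff] using h
  have hcard := Finset.card_le_card hsub
  rw [Finset.card_image_of_injective _ hf, Fin.card_Iic, Fin.card_Iio] at hcard
  omega

theorem le_of_le_comp_perm_of_antitone {n : ℕ} {α : Type*} [Preorder α] {ν η : Fin n → α}
    (hν : Antitone ν) (hη : Antitone η) {π : Equiv.Perm (Fin n)}
    (h : ∀ i, ν i ≤ η (π i)) (i : Fin n) : ν i ≤ η i := by
  obtain ⟨j, hji, hij⟩ := Fin.exists_le_le_apply_of_injective π.injective i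
  calc ν i ≤ ν j := hν hji
    _ ≤ η (π j) := h j
    _ ≤ η i := hη hij

namespace Preceq

variable {N : ℕ} {ν η : Fin N → ℕ}

theorem exists_perm_le (h : Preceq ν η) : ∃ π : Equiv.Perm (Fin N), ∀ i, ν i ≤ η (π i) := by
  obtain ⟨π, hπ⟩ := h
  refine ⟨π, fun i => ?_⟩
  rcases lt_or_ge i (π i) with hi | hi
  · exact ((hπ i).1 hi).le
  · exact (hπ i).2 hi

theorem of_le (h : ∀ i, ν i ≤ η i) : Preceq ν η :=
  ⟨1, fun i => ⟨fun hi => absurd hi (lt_irrefl i), fun _ => h i⟩⟩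

end Preceq

theorem stmt_4 (N : ℕ) (η ν : Fin N → ℕ)
    (hη : ∀ i j : Fin N, i ≤ j → η j ≤ η i) (hν : ∀ i j : Fin N, i ≤ j → ν j ≤ ν i) :
    Preceq ν η ↔ ∀ i, ν i ≤ η i := by
  refine ⟨fun h => ?_, Preceq.of_le⟩
  obtain ⟨π, hπ⟩ := h.exists_perm_le
  exact le_of_le_comp_perm_of_antitone (fun i j hij => hν i j hij) (fun i j hij => hη i j hij) hπ
end

section
/- Let η ∈ ℕ^N be a composition and I = {t_1 < t_2 < ... < t_s} a nonempty subset of {1,...,N}. Define c_I(η) by: (c_I(η))_{t_j} = η_{t_{j+1}} for j = 1,...,s−1, (c_I(η))_{t_s} = η_{t_1} + 1, and (c_I(η))_i = η_i for i ∉ I. Then |c_I(η)| = |η| + 1, and η ≼ c_I(η) ≼ η + (1^N) where ≼ is the order: ν ≼ μ iff there is π ∈ S_N with ν_i < μ_{π(i)} for i < π(i) and ν_i ≤ μ_{π(i)} for i ≥ π(i). -/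
/-- The composition `c_I(η)`: for `I = {t_1 < … < t_s}`, it sends `t_j ↦ η_{t_{j+1}}`
(`j < s`), `t_s ↦ η_{t_1} + 1`, and fixes the entries off `I`. -/
def cI {N : ℕ} (η : Fin N → ℕ) (I : Finset (Fin N)) : Fin N → ℕ := fun i =>
  if hi : i ∈ I then
    if h : (I.filter fun j => i < j).Nonempty
    then η ((I.filter fun j => i < j).min' h)
    else η (I.min' ⟨i, hi⟩) + 1
  else η i

/-!
Let `σ` be the permutation of `Fin N` that sends each element of `I` to the next element of `I`,
the largest one back to the smallest, and fixes everything outside `I`. Then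
`c_I(η) i = η (σ i) + [i = max I]`, which gives the size at once. The only descent of `σ`
(a point with `σ i < i`) is `max I`, exactly where `c_I` carries the extra `1`; so `σ⁻¹`
witnesses `η ≼ c_I(η)` and `σ` witnesses `c_I(η) ≼ η + 1`.
-/

namespace Finset

variable {α : Type*} [LinearOrder α] (I : Finset α)

def cyclicSucc (i : α) : α :=
  if hi : i ∈ I then
    if h : (I.filter (i < ·)).Nonempty then (I.filter (i < ·)).min' h else I.min' ⟨i, hi⟩
  else i

variable {I}

theorem filter_lt_nonempty_iff (hI : I.Nonempty) {i : α} :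
    (I.filter (i < ·)).Nonempty ↔ i < I.max' hI := by
  rw [filter_nonempty_iff, ← not_le, max'_le_iff]
  push Not
  rfl

theorem cyclicSucc_of_notMem {i : α} (hi : i ∉ I) : I.cyclicSucc i = i := by
  simp [cyclicSucc, hi]

theorem cyclicSucc_mem {i : α} (hi : i ∈ I) : I.cyclicSucc i ∈ I := by
  unfold cyclicSucc
  split_ifs with h
  · exact (mem_filter.mp (min'_mem _ h)).1
  · exact min'_mem _ _

theorem lt_cyclicSucc {i : α} (hi : i ∈ I) (h : (I.filter (i < ·)).Nonempty) :
    i < I.cyclicSucc i := by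
  simp only [cyclicSucc, dif_pos hi, dif_pos h]
  exact (mem_filter.mp (min'_mem _ h)).2

theorem cyclicSucc_max' (hI : I.Nonempty) : I.cyclicSucc (I.max' hI) = I.min' hI := by
  have h : ¬ (I.filter (I.max' hI < ·)).Nonempty := by
    rw [filter_lt_nonempty_iff hI]
    exact lt_irrefl _
  simp only [cyclicSucc, dif_pos (max'_mem I hI), dif_neg h]

theorem le_cyclicSucc (hI : I.Nonempty) {i : α} (h : i ≠ I.max' hI) : i ≤ I.cyclicSucc i := by
  by_cases hi : i ∈ I
  · exact (lt_cyclicSucc hi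
      ((filter_lt_nonempty_iff hI).mpr ((le_max' I i hi).lt_of_ne h))).le
  · exact (cyclicSucc_of_notMem hi).ge

theorem eq_max'_of_cyclicSucc_lt (hI : I.Nonempty) {i : α} (h : I.cyclicSucc i < i) :
    i = I.max' hI :=
  by_contra fun hne => (le_cyclicSucc hI hne).not_gt h

theorem ne_max'_of_lt_cyclicSucc (hI : I.Nonempty) {i : α} (h : i < I.cyclicSucc i) :
    i ≠ I.max' hI := by
  rintro rfl
  rw [cyclicSucc_max'] at h
  exact h.not_ge (min'_le_max' I hI)

theorem cyclicSucc_ne_of_lt {a b : α} (hab : a < b) : I.cyclicSucc a ≠ I.cyclicSucc b := by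
  by_cases ha : a ∈ I <;> by_cases hb : b ∈ I
  · have hfa : (I.filter (a < ·)).Nonempty := ⟨b, mem_filter.mpr ⟨hb, hab⟩⟩
    have hsa : I.cyclicSucc a ≤ b := by
      simp only [cyclicSucc, dif_pos ha, dif_pos hfa]
      exact min'_le _ _ (mem_filter.mpr ⟨hb, hab⟩)
    by_cases hfb : (I.filter (b < ·)).Nonempty
    · exact (hsa.trans_lt (lt_cyclicSucc hb hfb)).ne
    · -- `b` is the largest element, so its successor wraps around below `a`
      have hsb : I.cyclicSucc b ≤ a := by
        simp only [cyclicSucc, dif_pos hb, dif_neg hfb]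
        exact min'_le _ _ ha
      exact (hsb.trans_lt (lt_cyclicSucc ha hfa)).ne'
  · intro h
    exact hb (cyclicSucc_of_notMem hb ▸ h ▸ cyclicSucc_mem ha)
  · intro h
    exact ha (cyclicSucc_of_notMem ha ▸ h.symm ▸ cyclicSucc_mem hb)
  · rw [cyclicSucc_of_notMem ha, cyclicSucc_of_notMem hb]
    exact hab.ne

theorem cyclicSucc_injective : Function.Injective I.cyclicSucc :=
  Function.Injective.of_lt_imp_ne fun _ _ => cyclicSucc_ne_of_lt

variable (I) in
noncomputable def cyclicPerm [Finite α] : Equiv.Perm α :=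
  Equiv.ofBijective I.cyclicSucc (Finite.injective_iff_bijective.mp cyclicSucc_injective)

@[simp]
theorem cyclicPerm_apply [Finite α] (i : α) : I.cyclicPerm i = I.cyclicSucc i := rfl

end Finset

open Finset

theorem cI_eq_cyclicSucc {N : ℕ} (η : Fin N → ℕ) {I : Finset (Fin N)} (hI : I.Nonempty)
    (i : Fin N) : cI η I i = η (I.cyclicSucc i) + if i = I.max' hI then 1 else 0 := by
  by_cases hi : i ∈ I
  · by_cases h : (I.filter (i < ·)).Nonempty
    · have hne : i ≠ I.max' hI := ((filter_lt_nonempty_iff hI).mp h).ne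
      simp [cI, cyclicSucc, hi, h, hne]
    · have he : i = I.max' hI := ((le_max' I i hi).lt_or_eq.resolve_left
        (mt (filter_lt_nonempty_iff hI).mpr h))
      simp only [cI, cyclicSucc, dif_pos hi, dif_neg h, if_pos he]
  · have hne : i ≠ I.max' hI := fun he => hi (he ▸ max'_mem I hI)
    simp [cI, cyclicSucc, hi, hne]

theorem stmt_5 (N : ℕ) (η : Fin N → ℕ) (I : Finset (Fin N)) (hI : I.Nonempty) :
    (∑ i, cI η I i = (∑ i, η i) + 1) ∧
    Preceq η (cI η I) ∧ Preceq (cI η I) (fun i => η i + 1) := by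
  have hcI := cI_eq_cyclicSucc η hI
  refine ⟨?_, ⟨I.cyclicPerm.symm, fun i => ?_⟩, ⟨I.cyclicPerm, fun i => ?_⟩⟩
  · simp only [hcI, sum_add_distrib, sum_ite_eq', mem_univ, if_true]
    rw [← Equiv.sum_comp I.cyclicPerm η]
    rfl
  · obtain ⟨j, rfl⟩ := I.cyclicPerm.surjective i
    rw [Equiv.symm_apply_apply]
    simp only [cyclicPerm_apply, hcI]
    refine ⟨fun h => ?_, fun _ => Nat.le_add_right _ _⟩
    simp [eq_max'_of_cyclicSucc_lt hI h]
  · simp only [cyclicPerm_apply, hcI]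
    refine ⟨fun h => ?_, fun _ => ?_⟩
    · simp [ne_max'_of_lt_cyclicSucc hI h]
    · split_ifs <;> omega
end

section
/- Let η ∈ ℕ^N and I = {t_1 < ... < t_s} ⊆ {1,...,N} be nonempty, with ν = c_I(η) defined by ν_{t_j} = η_{t_{j+1}} (j = 1,...,s−1), ν_{t_s} = η_{t_1} + 1, ν_i = η_i for i ∉ I. Then I is maximal with respect to η, i.e. η_j ≠ η_{t_u} for all j with t_{u−1} < j < t_u (for u = 1,...,s, with t_0 := 0) and η_j ≠ η_{t_1} + 1 for all j with t_s < j ≤ N, if and only if ν_j ≠ ν_{t_s} − 1 for 1 ≤ j < t_1 and ν_j ≠ ν_{t_u} for t_u < j < t_{u+1} (u = 1,...,s, with t_{s+1} := N+1). -/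
/-- `I = {t_1 < … < t_s}` is maximal with respect to `η`:
`η_j ≠ η_{t_u}` for `t_{u-1} < j < t_u` and `η_j ≠ η_{t_1} + 1` for `j > t_s`. -/
def MaximalWrt {N : ℕ} (η : Fin N → ℕ) (I : Finset (Fin N)) : Prop :=
  I.Nonempty ∧ ∀ j : Fin N, j ∉ I →
    if h : (I.filter fun t => j < t).Nonempty
    then η j ≠ η ((I.filter fun t => j < t).min' h)
    else ∀ hI : I.Nonempty, η j ≠ η (I.min' hI) + 1

namespace Finset

variable {α : Type*} [LinearOrder α] {s : Finset α} {j : α}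

theorem filter_max'_lt_eq_empty (hs : s.Nonempty) : s.filter (s.max' hs < ·) = ∅ :=
  filter_eq_empty_iff.mpr fun t ht => not_lt.mpr (s.le_max' t ht)

theorem filter_gt_eq_self_of_notMem (hj : j ∉ s) (h : ¬(s.filter (· < j)).Nonempty) :
    s.filter (j < ·) = s := by
  refine filter_true_of_mem fun t ht => ?_
  rcases lt_trichotomy t j with hlt | rfl | hgt
  · exact absurd ⟨t, mem_filter.mpr ⟨ht, hlt⟩⟩ h
  · exact absurd ht hj
  · exact hgt

theorem filter_max'_filter_lt_lt (hj : j ∉ s) (h : (s.filter (· < j)).Nonempty) :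
    s.filter ((s.filter (· < j)).max' h < ·) = s.filter (j < ·) := by
  obtain ⟨-, hmj⟩ := mem_filter.mp ((s.filter (· < j)).max'_mem h)
  ext t
  simp only [mem_filter, and_congr_right_iff]
  intro ht
  refine ⟨fun hmt => ?_, hmj.trans⟩
  rcases lt_trichotomy t j with hlt | rfl | hgt
  · exact absurd ((s.filter (· < j)).le_max' t (mem_filter.mpr ⟨ht, hlt⟩)) (not_le.mpr hmt)
  · exact absurd ht hj
  · exact hgt

end Finset

section cI

variable {N : ℕ} (η : Fin N → ℕ) {I : Finset (Fin N)}

/-- The value `c_I(η)` takes at an element of `I` whose larger elements in `I` form `S`,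
where `t₁ = min I`. -/
def cIValue (S : Finset (Fin N)) (t₁ : Fin N) : ℕ :=
  if h : S.Nonempty then η (S.min' h) else η t₁ + 1

theorem cI_of_notMem {j : Fin N} (hj : j ∉ I) : cI η I j = η j := by
  simp [cI, hj]

theorem cI_of_mem (hI : I.Nonempty) {m : Fin N} (hm : m ∈ I) :
    cI η I m = cIValue η (I.filter (m < ·)) (I.min' hI) := by
  simp only [cI, cIValue, dif_pos hm]

theorem cI_max' (hI : I.Nonempty) : cI η I (I.max' hI) = η (I.min' hI) + 1 := by
  rw [cI_of_mem η hI (I.max'_mem hI), Finset.filter_max'_lt_eq_empty, cIValue,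
    dif_neg Finset.not_nonempty_empty]

theorem maximalWrt_iff (hI : I.Nonempty) :
    MaximalWrt η I ↔ ∀ j ∉ I, η j ≠ cIValue η (I.filter (j < ·)) (I.min' hI) := by
  rw [MaximalWrt, and_iff_right hI]
  refine forall₂_congr fun j _ => ?_
  unfold cIValue
  split_ifs
  · rfl
  · exact ⟨fun h => h hI, fun h _ => h⟩

end cI

theorem stmt_6 (N : ℕ) (η : Fin N → ℕ) (I : Finset (Fin N)) (hI : I.Nonempty) :
    MaximalWrt η I ↔
      ∀ j : Fin N, j ∉ I →
        if h : (I.filter fun t => t < j).Nonempty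
        then cI η I j ≠ cI η I ((I.filter fun t => t < j).max' h)
        else cI η I j ≠ cI η I (I.max' hI) - 1 := by
  rw [maximalWrt_iff η hI]
  refine forall₂_congr fun j hj => ?_
  rw [cI_of_notMem η hj]
  split_ifs with hlt
  · rw [cI_of_mem η hI (Finset.mem_filter.mp ((I.filter (· < j)).max'_mem hlt)).1,
      Finset.filter_max'_filter_lt_lt hj hlt]
  · rw [cI_max', Nat.add_sub_cancel, Finset.filter_gt_eq_self_of_notMem hj hlt, cIValue,
      dif_pos hI]
end

section
/- With Φ(I) := {j−1 : j ∈ I, j ≥ 2} ∪ {N : if 1 ∈ I} and c_I(η) defined by (c_I(η))_{t_j} = η_{t_{j+1}} for j < s, (c_I(η))_{t_s} = η_{t_1}+1, (c_I(η))_i = η_i otherwise (where I = {t_1 < ... < t_s}), one has c_{Φ(I)}(Φη) = Φ(c_I(η)) for any composition η ∈ ℕ^N and nonempty I ⊆ {1,...,N}. -/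
/-- The operation `Φ` on index sets (1-indexed: `Φ(I) = {j−1 : j ∈ I, j ≥ 2} ∪ {N if 1 ∈ I}`;
here written 0-indexed on `Fin N`). -/
def PhiSet {N : ℕ} (hN : 0 < N) (I : Finset (Fin N)) : Finset (Fin N) :=
  ((I.filter fun j : Fin N => (j : ℕ) ≠ 0).image fun j : Fin N =>
      (⟨(j : ℕ) - 1, lt_of_le_of_lt (Nat.sub_le _ _) j.isLt⟩ : Fin N)) ∪
    (if (⟨0, hN⟩ : Fin N) ∈ I then {(⟨N - 1, Nat.sub_lt hN one_pos⟩ : Fin N)} else ∅)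

private lemma min'_eq_of {N : ℕ} {s : Finset (Fin N)} (h : s.Nonempty) {a : Fin N}
    (ha : a ∈ s) (hle : ∀ b ∈ s, a ≤ b) : s.min' h = a :=
  le_antisymm (Finset.min'_le _ _ ha) (Finset.le_min' _ _ _ hle)

theorem stmt_8 (N : ℕ) (hN : 0 < N) (η : Fin N → ℕ) (I : Finset (Fin N))
    (hI : I.Nonempty) :
    cI (PhiComp η) (PhiSet hN I) = PhiComp (cI η I) := by
  have memJ : ∀ j : Fin N, j ∈ PhiSet hN I ↔
      (∃ h : (j : ℕ) + 1 < N, (⟨(j : ℕ) + 1, h⟩ : Fin N) ∈ I) ∨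
      ((j : ℕ) + 1 = N ∧ (⟨0, hN⟩ : Fin N) ∈ I) := by
    intro j
    simp only [PhiSet, Finset.mem_union, Finset.mem_image, Finset.mem_filter]
    constructor
    · rintro (⟨k, ⟨hk, hk0⟩, rfl⟩ | h)
      · left
        have hlt : (k : ℕ) - 1 + 1 < N := by omega
        refine ⟨hlt, ?_⟩
        have : (⟨(k : ℕ) - 1 + 1, hlt⟩ : Fin N) = k := Fin.ext (by simp; omega)
        rwa [this]
      · split_ifs at h with h0
        · simp only [Finset.mem_singleton] at h
          subst h
          exact Or.inr ⟨by simp; omega, h0⟩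
        · simp at h
    · rintro (⟨h, hmem⟩ | ⟨hj, h0⟩)
      · left
        refine ⟨⟨(j : ℕ) + 1, h⟩, ⟨hmem, by simp⟩, Fin.ext (by simp)⟩
      · right
        rw [if_pos h0]
        simp only [Finset.mem_singleton]
        exact Fin.ext (by simp; omega)
  funext i
  by_cases hiN : (i : ℕ) + 1 < N
  · -- RHS = cI η I ⟨i+1⟩
    set i' : Fin N := ⟨(i : ℕ) + 1, hiN⟩ with hi'
    have hrhs : PhiComp (cI η I) i = cI η I i' := by
      simp only [PhiComp, dif_pos hiN, hi']
    rw [hrhs]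
    by_cases hi'I : i' ∈ I
    · have hiJ : i ∈ PhiSet hN I := (memJ i).2 (Or.inl ⟨hiN, hi'I⟩)
      rw [cI, dif_pos hiJ, cI, dif_pos hi'I]
      by_cases hT : (I.filter fun j => i' < j).Nonempty
      · rw [dif_pos hT]
        set t := (I.filter fun j => i' < j).min' hT with ht
        have htmem : t ∈ I ∧ i' < t := by
          have := Finset.min'_mem _ hT
          rwa [Finset.mem_filter] at this
        have hti : (i : ℕ) + 1 < (t : ℕ) := htmem.2
        have hp : ((t : ℕ) - 1) < N := by omega
        set p : Fin N := ⟨(t : ℕ) - 1, hp⟩ with hpdef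
        have hpJ : p ∈ PhiSet hN I := by
          refine (memJ p).2 (Or.inl ⟨by simp +zetaDelta; omega, ?_⟩)
          have : (⟨(p : ℕ) + 1, by simp +zetaDelta; omega⟩ : Fin N) = t := Fin.ext (by simp [hpdef]; omega)
          rw [this]; exact htmem.1
        have hpS : p ∈ (PhiSet hN I).filter fun j => i < j := by
          rw [Finset.mem_filter]
          exact ⟨hpJ, by simp [hpdef, Fin.lt_def]; omega⟩
        have hS : ((PhiSet hN I).filter fun j => i < j).Nonempty := ⟨p, hpS⟩
        rw [dif_pos hS]
        have hmin : ((PhiSet hN I).filter fun j => i < j).min' hS = p := by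
          refine min'_eq_of hS hpS ?_
          intro b hb
          rw [Finset.mem_filter] at hb
          rcases (memJ b).1 hb.1 with ⟨hb1, hb2⟩ | ⟨hb1, _⟩
          · have : (⟨(b : ℕ) + 1, hb1⟩ : Fin N) ∈ I.filter fun j => i' < j := by
              rw [Finset.mem_filter]
              refine ⟨hb2, ?_⟩
              have := hb.2
              simp only [Fin.lt_def] at this ⊢
              simpa +zetaDelta using by omega
            have := Finset.min'_le _ _ this
            rw [← ht] at this
            simp only [Fin.le_def] at this ⊢
            simp +zetaDelta at this ⊢
            omega
          · simp only [Fin.le_def]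
            simp
            omega
        rw [hmin]
        have : PhiComp η p = η t := by
          have hlt : (p : ℕ) + 1 < N := by simp +zetaDelta; omega
          rw [PhiComp]
          simp only [dif_pos hlt]
          congr 1
          exact Fin.ext (by simp [hpdef]; omega)
        rw [this]
      · rw [dif_neg hT]
        by_cases h0 : (⟨0, hN⟩ : Fin N) ∈ I
        · -- S nonempty, min = N-1
          have hlast : (⟨N - 1, Nat.sub_lt hN one_pos⟩ : Fin N) ∈ PhiSet hN I :=
            (memJ _).2 (Or.inr ⟨by simp; omega, h0⟩)
          have hlastS : (⟨N - 1, Nat.sub_lt hN one_pos⟩ : Fin N) ∈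
              (PhiSet hN I).filter fun j => i < j := by
            rw [Finset.mem_filter]
            exact ⟨hlast, by simp [Fin.lt_def]; omega⟩
          have hS : ((PhiSet hN I).filter fun j => i < j).Nonempty := ⟨_, hlastS⟩
          rw [dif_pos hS]
          have hmin : ((PhiSet hN I).filter fun j => i < j).min' hS =
              ⟨N - 1, Nat.sub_lt hN one_pos⟩ := by
            refine min'_eq_of hS hlastS ?_
            intro b hb
            rw [Finset.mem_filter] at hb
            rcases (memJ b).1 hb.1 with ⟨hb1, hb2⟩ | ⟨hb1, _⟩
            · exfalso
              apply hT
              refine ⟨⟨(b : ℕ) + 1, hb1⟩, ?_⟩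
              rw [Finset.mem_filter]
              refine ⟨hb2, ?_⟩
              have := hb.2
              simp only [Fin.lt_def] at this ⊢
              simpa +zetaDelta using by omega
            · simp only [Fin.le_def]; omega
          rw [hmin]
          have hImin : I.min' ⟨i', hi'I⟩ = ⟨0, hN⟩ := by
            refine min'_eq_of _ h0 ?_
            intro b _
            simp [Fin.le_def]
          rw [hImin, PhiComp]
          have : ¬ ((⟨N - 1, Nat.sub_lt hN one_pos⟩ : Fin N) : ℕ) + 1 < N := by simp; omega
          rw [dif_neg this]
        · -- S empty
          have hS : ¬ ((PhiSet hN I).filter fun j => i < j).Nonempty := by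
            rintro ⟨b, hb⟩
            rw [Finset.mem_filter] at hb
            rcases (memJ b).1 hb.1 with ⟨hb1, hb2⟩ | ⟨_, hb0⟩
            · apply hT
              refine ⟨⟨(b : ℕ) + 1, hb1⟩, ?_⟩
              rw [Finset.mem_filter]
              refine ⟨hb2, ?_⟩
              have := hb.2
              simp only [Fin.lt_def] at this ⊢
              simpa +zetaDelta using by omega
            · exact h0 hb0
          rw [dif_neg hS]
          set m := I.min' ⟨i', hi'I⟩ with hm
          have hmI : m ∈ I := Finset.min'_mem _ _
          have hm0 : (m : ℕ) ≠ 0 := by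
            intro h
            apply h0
            have : m = ⟨0, hN⟩ := Fin.ext h
            rwa [this] at hmI
          have hp : (m : ℕ) - 1 < N := by omega
          have hpJ : (⟨(m : ℕ) - 1, hp⟩ : Fin N) ∈ PhiSet hN I := by
            refine (memJ _).2 (Or.inl ⟨by simp; omega, ?_⟩)
            have : (⟨((⟨(m : ℕ) - 1, hp⟩ : Fin N) : ℕ) + 1, by simp; omega⟩ : Fin N) = m :=
              Fin.ext (by simp; omega)
            rwa [this]
          have hJne : (PhiSet hN I).Nonempty := ⟨_, hpJ⟩
          have hJmin : (PhiSet hN I).min' ⟨i, hiJ⟩ = ⟨(m : ℕ) - 1, hp⟩ := by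
            refine min'_eq_of _ hpJ ?_
            intro b hb
            rcases (memJ b).1 hb with ⟨hb1, hb2⟩ | ⟨_, hb0⟩
            · have : (m : ℕ) ≤ (b : ℕ) + 1 := Finset.min'_le _ _ hb2
              simp only [Fin.le_def]
              omega
            · exact absurd hb0 h0
          rw [hJmin, PhiComp]
          have hlt : (((⟨(m : ℕ) - 1, hp⟩ : Fin N)) : ℕ) + 1 < N := by simp; omega
          rw [dif_pos hlt]
          congr 2
          exact Fin.ext (by simp; omega)
    · -- i' ∉ I: i ∉ J
      have hiJ : i ∉ PhiSet hN I := by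
        intro h
        rcases (memJ i).1 h with ⟨h1, h2⟩ | ⟨h1, _⟩
        · exact hi'I h2
        · omega
      rw [cI, dif_neg hiJ, cI, dif_neg hi'I, PhiComp, dif_pos hiN]
  · -- i = N-1
    have hieq : (i : ℕ) + 1 = N := by have := i.isLt; omega
    have hrhs : PhiComp (cI η I) i = cI η I ⟨0, i.pos⟩ + 1 := by
      rw [PhiComp, dif_neg hiN]
    rw [hrhs]
    by_cases h0 : (⟨0, hN⟩ : Fin N) ∈ I
    · have hiJ : i ∈ PhiSet hN I := (memJ i).2 (Or.inr ⟨hieq, h0⟩)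
      have hS : ¬ ((PhiSet hN I).filter fun j => i < j).Nonempty := by
        rintro ⟨b, hb⟩
        rw [Finset.mem_filter] at hb
        have := hb.2
        simp only [Fin.lt_def] at this
        have := b.isLt
        omega
      rw [cI, dif_pos hiJ, dif_neg hS]
      have h0' : (⟨0, i.pos⟩ : Fin N) ∈ I := h0
      rw [cI, dif_pos h0']
      by_cases hT0 : (I.filter fun j => (⟨0, i.pos⟩ : Fin N) < j).Nonempty
      · rw [dif_pos hT0]
        set t := (I.filter fun j => (⟨0, i.pos⟩ : Fin N) < j).min' hT0 with ht
        have htmem : t ∈ I ∧ (0 : ℕ) < (t : ℕ) := by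
          have := Finset.min'_mem _ hT0
          rw [Finset.mem_filter] at this
          exact ⟨this.1, this.2⟩
        have hp : (t : ℕ) - 1 < N := by omega
        have hpJ : (⟨(t : ℕ) - 1, hp⟩ : Fin N) ∈ PhiSet hN I := by
          refine (memJ _).2 (Or.inl ⟨by simp; omega, ?_⟩)
          have : (⟨((⟨(t : ℕ) - 1, hp⟩ : Fin N) : ℕ) + 1, by simp; omega⟩ : Fin N) = t :=
            Fin.ext (by simp; omega)
          rw [this]; exact htmem.1
        have hJmin : (PhiSet hN I).min' ⟨i, hiJ⟩ = ⟨(t : ℕ) - 1, hp⟩ := by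
          refine min'_eq_of _ hpJ ?_
          intro b hb
          rcases (memJ b).1 hb with ⟨hb1, hb2⟩ | ⟨hb1, _⟩
          · have : (⟨(b : ℕ) + 1, hb1⟩ : Fin N) ∈
                I.filter fun j => (⟨0, i.pos⟩ : Fin N) < j := by
              rw [Finset.mem_filter]
              exact ⟨hb2, by simp [Fin.lt_def]⟩
            have := Finset.min'_le _ _ this
            rw [← ht] at this
            simp only [Fin.le_def] at this ⊢
            simp at this ⊢
            omega
          · simp only [Fin.le_def]
            simp
            omega
        rw [hJmin, PhiComp]
        have hlt : (((⟨(t : ℕ) - 1, hp⟩ : Fin N)) : ℕ) + 1 < N := by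
          simp; have := t.isLt; omega
        rw [dif_pos hlt]
        congr 2
        exact Fin.ext (by simp; omega)
      · rw [dif_neg hT0]
        -- I = {0}; min J = N-1
        have hJmin : (PhiSet hN I).min' ⟨i, hiJ⟩ = ⟨N - 1, Nat.sub_lt hN one_pos⟩ := by
          refine min'_eq_of _ ((memJ _).2 (Or.inr ⟨by simp; omega, h0⟩)) ?_
          intro b hb
          rcases (memJ b).1 hb with ⟨hb1, hb2⟩ | ⟨hb1, _⟩
          · exfalso
            apply hT0
            refine ⟨⟨(b : ℕ) + 1, hb1⟩, ?_⟩
            rw [Finset.mem_filter]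
            exact ⟨hb2, by simp [Fin.lt_def]⟩
          · simp only [Fin.le_def]; omega
        rw [hJmin, PhiComp]
        have : ¬ (((⟨N - 1, Nat.sub_lt hN one_pos⟩ : Fin N)) : ℕ) + 1 < N := by simp; omega
        rw [dif_neg this]
        have hImin : I.min' ⟨_, h0'⟩ = ⟨0, hN⟩ := by
          refine min'_eq_of _ h0 ?_
          intro b _
          simp [Fin.le_def]
        rw [hImin]
    · have hiJ : i ∉ PhiSet hN I := by
        intro h
        rcases (memJ i).1 h with ⟨h1, _⟩ | ⟨_, h2⟩
        · omega
        · exact h0 h2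
      have h0' : (⟨0, i.pos⟩ : Fin N) ∉ I := h0
      rw [cI, dif_neg hiJ, cI, dif_neg h0', PhiComp, dif_neg hiN]
end

section
/- Let η ∈ ℕ^N, 1 ≤ i ≤ N−1 with η_i < η_{i+1}, and let I be maximal with respect to η with i ∈ I and i+1 ∉ I. Then (I ∪ {i+1}) \ {i} is maximal with respect to s_iη and c_{(I ∪ {i+1})\{i}}(s_iη) = s_i(c_I(η)). -/
private lemma minlem {N : ℕ} (i i' : Fin N) (hii : i < i')
    (hgap : ∀ t : Fin N, i < t → t ≠ i' → i' < t)
    (η : Fin N → ℕ) (F : Finset (Fin N)) (hiF : i ∈ F) (_hi'F : i' ∉ F)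
    (hne : (insert i' (F.erase i)).Nonempty) (hne' : F.Nonempty) :
    (η ∘ Equiv.swap i i') ((insert i' (F.erase i)).min' hne) = η (F.min' hne') := by
  have hmm : F.min' hne' ∈ F := Finset.min'_mem _ _
  have hle : F.min' hne' ≤ i := Finset.min'_le _ _ hiF
  have hmm' := Finset.min'_mem (insert i' (F.erase i)) hne
  rcases eq_or_lt_of_le hle with heq | hltm
  · -- min F = i, min of the new set is i'
    have h1 : (insert i' (F.erase i)).min' hne = i' := by
      refine le_antisymm (Finset.min'_le _ _ (Finset.mem_insert_self _ _)) ?_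
      rcases Finset.mem_insert.1 hmm' with h2 | h2
      · exact le_of_eq h2.symm
      · have hFm : (insert i' (F.erase i)).min' hne ∈ F := Finset.mem_of_mem_erase h2
        have hni : (insert i' (F.erase i)).min' hne ≠ i := Finset.ne_of_mem_erase h2
        have h3 : i ≤ (insert i' (F.erase i)).min' hne := heq ▸ Finset.min'_le _ _ hFm
        rcases eq_or_lt_of_le h3 with h4 | h4
        · exact absurd h4.symm hni
        · by_cases h5 : (insert i' (F.erase i)).min' hne = i'
          · exact le_of_eq h5.symm
          · exact le_of_lt (hgap _ h4 h5)
    rw [h1, ← heq]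
    simp [heq, Equiv.swap_apply_right]
  · -- min F < i, mins coincide
    have hminne : F.min' hne' ≠ i := ne_of_lt hltm
    have h1 : (insert i' (F.erase i)).min' hne = F.min' hne' := by
      refine le_antisymm (Finset.min'_le _ _ ?_) ?_
      · exact Finset.mem_insert_of_mem (Finset.mem_erase.2 ⟨hminne, hmm⟩)
      · rcases Finset.mem_insert.1 hmm' with h2 | h2
        · rw [h2]; exact le_of_lt (lt_trans hltm hii)
        · exact Finset.min'_le _ _ (Finset.mem_of_mem_erase h2)
    rw [h1]
    have hni' : F.min' hne' ≠ i' := ne_of_lt (lt_trans hltm hii)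
    simp [Equiv.swap_apply_of_ne_of_ne hminne hni']

theorem stmt_10 (N : ℕ) (η : Fin N → ℕ) (i : Fin N) (h : (i : ℕ) + 1 < N)
    (hlt : η i < η ⟨(i : ℕ) + 1, h⟩) (I : Finset (Fin N))
    (hmax : MaximalWrt η I) (hi : i ∈ I) (hi1 : (⟨(i : ℕ) + 1, h⟩ : Fin N) ∉ I) :
    MaximalWrt (η ∘ Equiv.swap i ⟨(i : ℕ) + 1, h⟩)
      (insert (⟨(i : ℕ) + 1, h⟩ : Fin N) (I.erase i)) ∧
    cI (η ∘ Equiv.swap i ⟨(i : ℕ) + 1, h⟩)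
        (insert (⟨(i : ℕ) + 1, h⟩ : Fin N) (I.erase i)) =
      (cI η I) ∘ Equiv.swap i ⟨(i : ℕ) + 1, h⟩ := by
  set i' : Fin N := ⟨(i : ℕ) + 1, h⟩ with hi'def
  set I' : Finset (Fin N) := insert i' (I.erase i) with hI'def
  have hii : i < i' := by rw [Fin.lt_def]; simp [hi'def]
  have hv : (i' : ℕ) = (i : ℕ) + 1 := rfl
  have hgap : ∀ t : Fin N, i < t → t ≠ i' → i' < t := by
    intro t h1 h2
    have h2' : (t : ℕ) ≠ (i : ℕ) + 1 := fun hc => h2 (Fin.ext (by rw [hv]; exact hc))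
    rw [Fin.lt_def] at h1 ⊢
    rw [hv]
    omega
  have hine : i ≠ i' := ne_of_lt hii
  have f4 : i' ∈ I' := Finset.mem_insert_self _ _
  have f3 : i ∉ I' := by simp [hI'def, Finset.mem_insert, Finset.mem_erase, hine]
  have fmem : ∀ t : Fin N, t ≠ i → t ≠ i' → (t ∈ I' ↔ t ∈ I) := by
    intro t h1 h2
    simp [hI'def, Finset.mem_insert, Finset.mem_erase, h1, h2]
  have hsw1 : Equiv.swap i i' i = i' := Equiv.swap_apply_left _ _
  have hsw2 : Equiv.swap i i' i' = i := Equiv.swap_apply_right _ _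
  have hsw3 : ∀ t : Fin N, t ≠ i → t ≠ i' → Equiv.swap i i' t = t := fun t h1 h2 =>
    Equiv.swap_apply_of_ne_of_ne h1 h2
  have ffilt_lt : ∀ j : Fin N, j < i →
      I'.filter (fun t => j < t) = insert i' ((I.filter fun t => j < t).erase i) := by
    intro j hj
    rw [hI'def, Finset.filter_insert, if_pos (lt_trans hj hii), Finset.filter_erase]
  have ffilt_gt : ∀ j : Fin N, i < j →
      I'.filter (fun t => j < t) = I.filter (fun t => j < t) := by
    intro j hj
    have hji' : ¬ j < i' := by
      by_cases h5 : j = i'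
      · simp [h5]
      · exact not_lt_of_gt (hgap j hj h5)
    rw [hI'def, Finset.filter_insert, if_neg hji', Finset.filter_erase,
      Finset.erase_eq_of_notMem]
    intro hc
    exact absurd (Finset.mem_filter.1 hc).2 (not_lt.2 hj.le)
  have fFi : I'.filter (fun t => i' < t) = I.filter (fun t => i < t) := by
    rw [ffilt_gt i' hii]
    ext t
    simp only [Finset.mem_filter]
    constructor
    · rintro ⟨ht, h2⟩; exact ⟨ht, lt_trans hii h2⟩
    · rintro ⟨ht, h2⟩
      refine ⟨ht, hgap t h2 ?_⟩
      intro he; rw [he] at ht; exact hi1 ht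
  have hminsI : ∀ (hne : I'.Nonempty) (hne' : I.Nonempty),
      (η ∘ Equiv.swap i i') (I'.min' hne) = η (I.min' hne') := fun hne hne' =>
    minlem i i' hii hgap η I hi hi1 hne hne'
  have hminsF : ∀ (j : Fin N), j < i → ∀ (hne : (I'.filter fun t => j < t).Nonempty)
      (hne' : (I.filter fun t => j < t).Nonempty),
      (η ∘ Equiv.swap i i') ((I'.filter fun t => j < t).min' hne)
        = η ((I.filter fun t => j < t).min' hne') := by
    intro j hj hne hne'
    have heq := ffilt_lt j hj
    have hiF : i ∈ I.filter fun t => j < t := Finset.mem_filter.2 ⟨hi, hj⟩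
    have hi'F : i' ∉ I.filter fun t => j < t := fun hc => hi1 (Finset.mem_filter.1 hc).1
    have h2 := minlem i i' hii hgap η (I.filter fun t => j < t) hiF hi'F
      (heq ▸ hne) hne'
    simp only [heq]
    exact h2
  have hhigh : ∀ (j : Fin N), i' < j → ∀ t ∈ I.filter (fun t => j < t),
      (η ∘ Equiv.swap i i') t = η t := by
    intro j hj t ht
    have h2 := (Finset.mem_filter.1 ht).2
    have hti : t ≠ i := ne_of_gt (lt_trans (lt_trans hii hj) h2)
    have hti' : t ≠ i' := ne_of_gt (lt_trans hj h2)
    show η (Equiv.swap i i' t) = η t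
    rw [hsw3 t hti hti']
  constructor
  · constructor
    · exact ⟨i', f4⟩
    · intro j hj
      by_cases hji : j = i
      · subst hji
        have hmemF : i' ∈ I'.filter fun t => j < t := Finset.mem_filter.2 ⟨f4, hii⟩
        have hne : (I'.filter fun t => j < t).Nonempty := ⟨i', hmemF⟩
        rw [dif_pos hne]
        have hminI' : (I'.filter fun t => j < t).min' hne = i' := by
          refine le_antisymm (Finset.min'_le _ _ hmemF) ?_
          have hm := Finset.min'_mem _ hne
          rw [Finset.mem_filter] at hm
          rcases Finset.mem_insert.1 hm.1 with h2 | h2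
          · exact le_of_eq h2.symm
          · refine le_of_lt (hgap _ hm.2 ?_)
            intro he
            exact hi1 (by rw [← he]; exact Finset.mem_of_mem_erase h2)
        rw [hminI']
        simp only [Function.comp_apply]
        rw [hsw1, hsw2]
        exact hlt.ne'
      · have hjne' : j ≠ i' := fun he => hj (he ▸ f4)
        have hjI : j ∉ I := fun hc => hj ((fmem j hji hjne').2 hc)
        have horg := hmax.2 j hjI
        have hηj : (η ∘ Equiv.swap i i') j = η j := by
          show η (Equiv.swap i i' j) = η j
          rw [hsw3 j hji hjne']
        rcases lt_trichotomy j i with hlt2 | he | hgt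
        · have hneF : (I.filter fun t => j < t).Nonempty :=
            ⟨i, Finset.mem_filter.2 ⟨hi, hlt2⟩⟩
          have hneF' : (I'.filter fun t => j < t).Nonempty :=
            ⟨i', Finset.mem_filter.2 ⟨f4, lt_trans hlt2 hii⟩⟩
          rw [dif_pos hneF']
          rw [dif_pos hneF] at horg
          rw [hηj, hminsF j hlt2 hneF' hneF]
          exact horg
        · exact absurd he hji
        · have hgt' : i' < j := hgap j hgt hjne'
          have heqf := ffilt_gt j hgt
          simp only [heqf]
          by_cases hne : (I.filter fun t => j < t).Nonempty
          · rw [dif_pos hne] at horg ⊢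
            rw [hηj, hhigh j hgt' _ (Finset.min'_mem _ hne)]
            exact horg
          · rw [dif_neg hne] at horg ⊢
            intro hI'
            rw [hηj, hminsI hI' hmax.1]
            exact horg hmax.1
  · funext k
    simp only [Function.comp_apply]
    by_cases hk1 : k = i
    · subst hk1
      rw [hsw1]
      simp only [cI]
      rw [dif_neg f3, dif_neg hi1]
      simp only [Function.comp_apply]
      rw [hsw1]
    · by_cases hk2 : k = i'
      · subst hk2
        rw [hsw2]
        simp only [cI]
        rw [dif_pos f4, dif_pos hi]
        simp only [fFi]
        by_cases hne : (I.filter fun t => i < t).Nonempty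
        · rw [dif_pos hne, dif_pos hne]
          have hm := Finset.min'_mem _ hne
          rw [Finset.mem_filter] at hm
          have hne2 : (I.filter fun t => i < t).min' hne ≠ i' := by
            intro he
            rw [he] at hm
            exact hi1 hm.1
          simp only [Function.comp_apply]
          rw [hsw3 _ (ne_of_gt hm.2) hne2]
        · rw [dif_neg hne, dif_neg hne]
          exact congrArg (· + 1) (hminsI _ _)
      · rw [hsw3 k hk1 hk2]
        simp only [cI]
        by_cases hkI : k ∈ I
        · have hkI' : k ∈ I' := (fmem k hk1 hk2).2 hkI
          rw [dif_pos hkI', dif_pos hkI]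
          rcases lt_trichotomy k i with h1 | h1 | h1
          · have hneF : (I.filter fun t => k < t).Nonempty :=
              ⟨i, Finset.mem_filter.2 ⟨hi, h1⟩⟩
            have hneF' : (I'.filter fun t => k < t).Nonempty :=
              ⟨i', Finset.mem_filter.2 ⟨f4, lt_trans h1 hii⟩⟩
            rw [dif_pos hneF', dif_pos hneF]
            exact hminsF k h1 hneF' hneF
          · exact absurd h1 hk1
          · have h1' : i' < k := hgap k h1 hk2
            have heqf := ffilt_gt k h1
            simp only [heqf]
            by_cases hne : (I.filter fun t => k < t).Nonempty
            · rw [dif_pos hne, dif_pos hne]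
              exact hhigh k h1' _ (Finset.min'_mem _ hne)
            · rw [dif_neg hne, dif_neg hne]
              exact congrArg (· + 1) (hminsI _ _)
        · have hkI' : k ∉ I' := fun hc => hkI ((fmem k hk1 hk2).1 hc)
          rw [dif_neg hkI', dif_neg hkI]
          simp only [Function.comp_apply]
          rw [hsw3 k hk1 hk2]
end

section
/- Let η ∈ ℕ^N and p with 0 ≤ p ≤ N. Define l'_η(i) := #{k < i : η_k ≥ η_i} + #{k > i : η_k > η_i}, and let M* := {i : l'_η(i) ≤ p − 1}. Then M* has exactly p elements, and for every p-element subset M ⊆ {1,...,N} with M ≠ M*, the composition η + χ_M is strictly smaller than η + χ_{M*} in the order ⊴ (ν ⊴ μ iff ν⁺ < μ⁺ in dominance order on partitions, or ν⁺ = μ⁺ and ν < μ in dominance order on compositions), where (χ_M)_i = 1 if i ∈ M and 0 otherwise. -/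
/-- `l'_η(i) = #{k < i : η_k ≥ η_i} + #{k > i : η_k > η_i}`. -/
def lprime {N : ℕ} (η : Fin N → ℕ) (i : Fin N) : ℕ :=
  (Finset.univ.filter fun k : Fin N => k < i ∧ η i ≤ η k).card +
  (Finset.univ.filter fun k : Fin N => i < k ∧ η i < η k).card

/-- The decreasing rearrangement `η⁺` of the composition `η`. -/
noncomputable def etaPlus {N : ℕ} (η : Fin N → ℕ) : Fin N → ℕ :=
  fun j => η (Tuple.sort η j.rev)

/-- The dominance order: all partial sums are `≤`. -/
def DomLE {N : ℕ} (ν μ : Fin N → ℕ) : Prop :=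
  ∀ k : ℕ, ∑ i ∈ Finset.univ.filter (fun i : Fin N => (i : ℕ) < k), ν i ≤
           ∑ i ∈ Finset.univ.filter (fun i : Fin N => (i : ℕ) < k), μ i

/-- The order `⊴` (strict): `ν ⊴ μ` iff `ν⁺ < μ⁺` in dominance order, or
`ν⁺ = μ⁺` and `ν < μ` in dominance order. -/
noncomputable def TriLT {N : ℕ} (ν μ : Fin N → ℕ) : Prop :=
  (DomLE (etaPlus ν) (etaPlus μ) ∧ etaPlus ν ≠ etaPlus μ) ∨
  (etaPlus ν = etaPlus μ ∧ DomLE ν μ ∧ ν ≠ μ)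

/-- The indicator vector `χ_M` of a subset `M`. -/
def chiSet {N : ℕ} (M : Finset (Fin N)) : Fin N → ℕ := fun i => if i ∈ M then 1 else 0

open Finset

variable {N : ℕ}

/-- the strict "precedes" relation: higher η first, ties broken by smaller index -/
def prec (η : Fin N → ℕ) (k i : Fin N) : Prop :=
  η i < η k ∨ (η i = η k ∧ k < i)

instance (η : Fin N → ℕ) (k i : Fin N) : Decidable (prec η k i) := by
  unfold prec; infer_instance

def rank (η : Fin N → ℕ) (i : Fin N) : ℕ :=
  (Finset.univ.filter fun k => prec η k i).card

theorem prec_trans (η : Fin N → ℕ) {a b c : Fin N} (h1 : prec η a b) (h2 : prec η b c) :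
    prec η a c := by
  rcases h1 with h1 | ⟨h1, h1'⟩ <;> rcases h2 with h2 | ⟨h2, h2'⟩
  · exact Or.inl (by omega)
  · exact Or.inl (by omega)
  · exact Or.inl (by omega)
  · exact Or.inr ⟨by omega, lt_trans h1' h2'⟩

theorem prec_trichot (η : Fin N → ℕ) {a b : Fin N} (h : a ≠ b) : prec η a b ∨ prec η b a := by
  rcases lt_trichotomy a b with h' | h' | h'
  · rcases lt_trichotomy (η a) (η b) with h2 | h2 | h2
    · exact Or.inr (Or.inl h2)
    · exact Or.inl (Or.inr ⟨h2.symm, h'⟩)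
    · exact Or.inl (Or.inl h2)
  · exact absurd h' h
  · rcases lt_trichotomy (η a) (η b) with h2 | h2 | h2
    · exact Or.inr (Or.inl h2)
    · exact Or.inr (Or.inr ⟨h2, h'⟩)
    · exact Or.inl (Or.inl h2)

theorem not_prec_self (η : Fin N → ℕ) (a : Fin N) : ¬ prec η a a := by
  simp [prec]

theorem rank_lt_rank (η : Fin N → ℕ) {a b : Fin N} (h : prec η a b) :
    rank η a < rank η b := by
  apply Finset.card_lt_card
  constructor
  · intro k hk
    simp only [mem_filter, mem_univ, true_and] at hk ⊢
    exact prec_trans η hk h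
  · intro hsub
    have : a ∈ Finset.univ.filter fun k => prec η k b := by
      simp only [mem_filter, mem_univ, true_and]; exact h
    have := hsub this
    simp only [mem_filter, mem_univ, true_and] at this
    exact not_prec_self η a this

theorem rank_injective (η : Fin N → ℕ) : Function.Injective (rank η) := by
  intro a b hab
  by_contra h
  rcases prec_trichot η h with h' | h'
  · exact absurd hab (Nat.ne_of_lt (rank_lt_rank η h'))
  · exact absurd hab.symm (Nat.ne_of_lt (rank_lt_rank η h'))

theorem rank_lt_N (η : Fin N → ℕ) (i : Fin N) : rank η i < N := by
  have : (Finset.univ.filter fun k => prec η k i) ⊆ univ.erase i := by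
    intro k hk
    simp only [mem_filter, mem_univ, true_and] at hk
    apply Finset.mem_erase.2 ⟨fun h => not_prec_self η i (by rw [h] at hk; exact hk), mem_univ k⟩
  calc rank η i ≤ (univ.erase i).card := Finset.card_le_card this
    _ < univ.card := Finset.card_lt_card (Finset.erase_ssubset (mem_univ i))
    _ = N := Finset.card_fin N

/-- lprime equals rank -/
theorem lprime_eq_rank (η : Fin N → ℕ) (i : Fin N) : lprime η i = rank η i := by
  unfold lprime rank
  have hdisj : Disjoint (Finset.univ.filter fun k : Fin N => k < i ∧ η i ≤ η k)
      (Finset.univ.filter fun k : Fin N => i < k ∧ η i < η k) := by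
    rw [Finset.disjoint_left]
    intro k hk hk'
    simp only [Finset.mem_filter] at hk hk'
    exact absurd (lt_trans hk.2.1 hk'.2.1) (lt_irrefl _)
  have hun : (Finset.univ.filter fun k => prec η k i) =
      (Finset.univ.filter fun k : Fin N => k < i ∧ η i ≤ η k) ∪
      (Finset.univ.filter fun k : Fin N => i < k ∧ η i < η k) := by
    ext k
    simp only [Finset.mem_filter, Finset.mem_union, Finset.mem_univ, true_and]; simp only [prec]
    constructor
    · rintro (h | ⟨h, h'⟩)
      · rcases lt_trichotomy k i with hk | hk | hk
        · exact Or.inl ⟨hk, le_of_lt h⟩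
        · exact absurd (hk ▸ h) (lt_irrefl _)
        · exact Or.inr ⟨hk, h⟩
      · exact Or.inl ⟨h', le_of_eq h⟩
    · rintro (⟨h, h'⟩ | ⟨h, h'⟩)
      · rcases eq_or_lt_of_le h' with h2 | h2
        · exact Or.inr ⟨h2, h⟩
        · exact Or.inl h2
      · exact Or.inl h'
  rw [hun, Finset.card_union_of_disjoint hdisj]

/-- rank as a bijection Fin N → Fin N -/
noncomputable def rankEquiv (η : Fin N → ℕ) : Equiv.Perm (Fin N) :=
  Equiv.ofBijective (fun i => ⟨rank η i, rank_lt_N η i⟩)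
    ((Finite.injective_iff_bijective).1 (fun a b h => rank_injective η (by
      simpa using congrArg Fin.val h)))

@[simp] theorem rankEquiv_apply (η : Fin N → ℕ) (i : Fin N) :
    (rankEquiv η i : ℕ) = rank η i := rfl

/-- topset: the t highest-ranked elements -/
def topset (η : Fin N → ℕ) (t : ℕ) : Finset (Fin N) :=
  Finset.univ.filter fun i => rank η i < t

theorem topset_mono (η : Fin N → ℕ) {s t : ℕ} (h : s ≤ t) : topset η s ⊆ topset η t := by
  intro i hi
  simp only [topset, Finset.mem_filter, Finset.mem_univ, true_and] at hi ⊢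
  omega

theorem card_filter_lt (t : ℕ) (ht : t ≤ N) :
    (Finset.univ.filter fun j : Fin N => (j : ℕ) < t).card = t := by
  have key : (Finset.univ.filter fun j : Fin N => (j : ℕ) < t).card = (Finset.range t).card := by
    refine Finset.card_bij (fun j _ => (j : ℕ)) ?_ ?_ ?_
    · intro j hj
      simp only [Finset.mem_filter] at hj
      exact Finset.mem_range.2 hj.2
    · intro a ha b hb hab
      exact Fin.val_injective hab
    · intro m hm
      have hm' := Finset.mem_range.1 hm
      exact ⟨⟨m, lt_of_lt_of_le hm' ht⟩, by simp [hm'], rfl⟩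
  rw [key, Finset.card_range]

theorem card_topset (η : Fin N → ℕ) (t : ℕ) : (topset η t).card = min t N := by
  have key : ∀ s ≤ N, (topset η s).card = s := by
    intro s hs
    have key2 : (topset η s).card = (Finset.univ.filter fun j : Fin N => (j : ℕ) < s).card := by
      refine Finset.card_bij (fun i _ => rankEquiv η i) ?_ ?_ ?_
      · intro i hi
        simp only [topset, Finset.mem_filter, Finset.mem_univ, true_and] at hi ⊢
        simpa using hi
      · intro a _ b _ hab
        exact (rankEquiv η).injective hab
      · intro j hj
        simp only [Finset.mem_filter, Finset.mem_univ, true_and] at hj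
        refine ⟨(rankEquiv η).symm j, ?_, by simp⟩
        simp only [topset, Finset.mem_filter, Finset.mem_univ, true_and]
        have h3 : rank η ((rankEquiv η).symm j) = ((rankEquiv η) ((rankEquiv η).symm j) : ℕ) := rfl
        rw [h3, Equiv.apply_symm_apply]
        exact hj
    rw [key2, card_filter_lt s hs]
  rcases le_total t N with h | h
  · rw [key t h, min_eq_left h]
  · have heq : topset η t = topset η N := by
      apply Finset.Subset.antisymm
      · intro i _
        simp only [topset, Finset.mem_filter, Finset.mem_univ, true_and]
        exact rank_lt_N η i
      · exact topset_mono η h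
    rw [min_eq_right h, heq, key N le_rfl]

theorem etaPlus_antitone (σ : Fin N → ℕ) : Antitone (etaPlus σ) := by
  intro a b hab
  exact Tuple.monotone_sort σ (Fin.rev_le_rev.2 hab)

theorem sortedByRank_antitone (σ : Fin N → ℕ) : Antitone (σ ∘ (rankEquiv σ).symm) := by
  intro a b hab
  by_contra h
  push_neg at h
  have hp : prec σ ((rankEquiv σ).symm b) ((rankEquiv σ).symm a) := Or.inl h
  have := rank_lt_rank σ hp
  have ha : rank σ ((rankEquiv σ).symm a) = (a : ℕ) := by
    have : ((rankEquiv σ) ((rankEquiv σ).symm a) : ℕ) = rank σ ((rankEquiv σ).symm a) := rfl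
    rw [← this, Equiv.apply_symm_apply]
  have hb : rank σ ((rankEquiv σ).symm b) = (b : ℕ) := by
    have : ((rankEquiv σ) ((rankEquiv σ).symm b) : ℕ) = rank σ ((rankEquiv σ).symm b) := rfl
    rw [← this, Equiv.apply_symm_apply]
  rw [ha, hb] at this
  omega

theorem etaPlus_perm (σ : Fin N → ℕ) :
    List.Perm (List.ofFn (etaPlus σ)) (List.ofFn σ) := by
  have : etaPlus σ = σ ∘ ((Fin.revPerm.trans (Tuple.sort σ))) := by
    funext j
    simp [etaPlus, Function.comp, Equiv.trans_apply, Fin.revPerm]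
  rw [this]
  exact Equiv.Perm.ofFn_comp_perm _ σ

theorem sortedByRank_perm (σ : Fin N → ℕ) :
    List.Perm (List.ofFn (σ ∘ (rankEquiv σ).symm)) (List.ofFn σ) :=
  Equiv.Perm.ofFn_comp_perm _ σ

theorem antitone_sorted (f : Fin N → ℕ) (hf : Antitone f) :
    (List.ofFn f).Pairwise (· ≥ ·) := by
  rw [List.pairwise_ofFn]
  intro i j hij
  exact hf (le_of_lt hij)

/-- The key uniqueness of decreasing rearrangement: etaPlus equals sort by rank. -/
theorem etaPlus_eq_sortedByRank (σ : Fin N → ℕ) :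
    etaPlus σ = σ ∘ (rankEquiv σ).symm := by
  apply List.ofFn_injective
  exact List.Perm.eq_of_pairwise'
    (antitone_sorted _ (etaPlus_antitone σ)) (antitone_sorted _ (sortedByRank_antitone σ)) ((etaPlus_perm σ).trans (sortedByRank_perm σ).symm)

/-- partial sums of etaPlus are sums over topsets -/
theorem sum_etaPlus_eq (σ : Fin N → ℕ) (k : ℕ) :
    ∑ j ∈ Finset.univ.filter (fun j : Fin N => (j : ℕ) < k), etaPlus σ j =
    ∑ i ∈ topset σ k, σ i := by
  rw [etaPlus_eq_sortedByRank]
  apply Finset.sum_nbij' (fun j => (rankEquiv σ).symm j) (fun i => rankEquiv σ i)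
  · intro j hj
    simp only [Finset.mem_filter, Finset.mem_univ, true_and] at hj
    simp only [topset, Finset.mem_filter, Finset.mem_univ, true_and]
    have : rank σ ((rankEquiv σ).symm j) = ((rankEquiv σ) ((rankEquiv σ).symm j) : ℕ) := rfl
    rw [this, Equiv.apply_symm_apply]
    exact hj
  · intro i hi
    simp only [topset, Finset.mem_filter, Finset.mem_univ, true_and] at hi
    simp only [Finset.mem_filter, Finset.mem_univ, true_and]
    simpa using hi
  · intro j _; simp
  · intro i _; simp
  · intro j _; rfl

/-- top-k maximality: any set's sum is at most the topset sum of the same size -/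
theorem sum_le_topset (σ : Fin N → ℕ) (S : Finset (Fin N)) :
    ∑ i ∈ S, σ i ≤ ∑ i ∈ topset σ S.card, σ i := by
  set t := S.card with ht
  set T := topset σ t with hT
  have hcardT : T.card = t := by
    rw [hT, card_topset, min_eq_left]
    rw [ht]
    exact le_trans (Finset.card_le_card (Finset.subset_univ S)) (le_of_eq (Finset.card_fin N))
  have hval : ∀ i ∈ S \ T, ∀ j ∈ T \ S, σ i ≤ σ j := by
    intro i hi j hj
    simp only [Finset.mem_sdiff, hT, topset, Finset.mem_filter, Finset.mem_univ, true_and] at hi hj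
    by_contra h
    push_neg at h
    have := rank_lt_rank σ (Or.inl h : prec σ i j)
    omega
  have hcard : (S \ T).card = (T \ S).card := by
    have h1 : (S \ T).card = S.card - (S ∩ T).card := by
      rw [← Finset.sdiff_inter_self_left S T, Finset.card_sdiff_of_subset Finset.inter_subset_left]
    have h2 : (T \ S).card = T.card - (T ∩ S).card := by
      rw [← Finset.sdiff_inter_self_left T S, Finset.card_sdiff_of_subset Finset.inter_subset_left]
    rw [h1, h2, Finset.inter_comm, hcardT, ht]
  have key : ∑ i ∈ S \ T, σ i ≤ ∑ j ∈ T \ S, σ j := by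
    rcases Finset.eq_empty_or_nonempty (S \ T) with he | hne
    · simp [he]
    · have hTS : (T \ S).Nonempty := by
        rw [← Finset.card_pos, ← hcard, Finset.card_pos]
        exact hne
      obtain ⟨c, hc, hcmin⟩ := Finset.exists_min_image (T \ S) σ hTS
      calc ∑ i ∈ S \ T, σ i ≤ ∑ _i ∈ S \ T, σ c :=
            Finset.sum_le_sum fun i hi => hval i hi c hc
        _ = (S \ T).card * σ c := by rw [Finset.sum_const, smul_eq_mul]
        _ = (T \ S).card * σ c := by rw [hcard]
        _ = ∑ _j ∈ T \ S, σ c := by rw [Finset.sum_const, smul_eq_mul]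
        _ ≤ ∑ j ∈ T \ S, σ j := Finset.sum_le_sum fun j hj => hcmin j hj
  have hS : ∑ i ∈ S, σ i = ∑ i ∈ S ∩ T, σ i + ∑ i ∈ S \ T, σ i :=
    (Finset.sum_inter_add_sum_sdiff S T σ).symm
  have hTT : ∑ i ∈ T, σ i = ∑ i ∈ T ∩ S, σ i + ∑ i ∈ T \ S, σ i :=
    (Finset.sum_inter_add_sum_sdiff T S σ).symm
  rw [hS, hTT, Finset.inter_comm T S]
  omega

theorem sum_add_chi (η : Fin N → ℕ) (S M : Finset (Fin N)) :
    ∑ i ∈ S, (η i + chiSet M i) = ∑ i ∈ S, η i + (S ∩ M).card := by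
  rw [Finset.sum_add_distrib]
  congr 1
  rw [show (S ∩ M) = S.filter (· ∈ M) from (Finset.filter_mem_eq_inter (s := S) (t := M)).symm]
  rw [Finset.card_filter]
  exact Finset.sum_congr rfl fun i _ => rfl

theorem topset_inter (η : Fin N → ℕ) (a b : ℕ) :
    topset η a ∩ topset η b = topset η (min a b) := by
  ext i
  simp only [topset, Finset.mem_inter, Finset.mem_filter, Finset.mem_univ, true_and]
  omega

theorem domle_key (η : Fin N → ℕ) (p : ℕ) (hp : p ≤ N) (M : Finset (Fin N)) (hM : M.card = p) :
    DomLE (etaPlus (fun i => η i + chiSet M i)) (etaPlus (fun i => η i + chiSet (topset η p) i)) := by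
  intro k
  set ν := fun i => η i + chiSet M i with hν
  set μ := fun i => η i + chiSet (topset η p) i with hμ
  set k' := min k N with hk'
  have hk'N : k' ≤ N := min_le_right _ _
  have hk'k : k' ≤ k := min_le_left _ _
  rw [sum_etaPlus_eq, sum_etaPlus_eq]
  set S := topset ν k with hS
  have hcardS : S.card = k' := card_topset ν k
  have hcardTk' : (topset η k').card = k' := by rw [card_topset, min_eq_left hk'N]
  have step1 : ∑ i ∈ S, ν i ≤ ∑ i ∈ topset η k', η i + min p k' := by
    rw [hν, sum_add_chi]
    have h1 : ∑ i ∈ S, η i ≤ ∑ i ∈ topset η k', η i := by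
      have := sum_le_topset η S
      rwa [hcardS] at this
    have h2 : (S ∩ M).card ≤ min p k' := by
      apply le_min
      · rw [← hM]; exact Finset.card_le_card Finset.inter_subset_right
      · rw [← hcardS]; exact Finset.card_le_card Finset.inter_subset_left
    omega
  have step2 : ∑ i ∈ topset η k', η i + min p k' = ∑ i ∈ topset η k', μ i := by
    rw [hμ, sum_add_chi, topset_inter, card_topset]
    congr 1
    omega
  have step3 : ∑ i ∈ topset η k', μ i ≤ ∑ i ∈ topset μ k, μ i := by
    calc ∑ i ∈ topset η k', μ i ≤ ∑ i ∈ topset μ (topset η k').card, μ i :=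
          sum_le_topset μ _
      _ = ∑ i ∈ topset μ k', μ i := by rw [hcardTk']
      _ ≤ ∑ i ∈ topset μ k, μ i :=
          Finset.sum_le_sum_of_subset (topset_mono μ hk'k)
  omega

/-- etaPlus has the same multiset of values -/
theorem multiset_etaPlus (σ : Fin N → ℕ) :
    Multiset.map (etaPlus σ) Finset.univ.val = Multiset.map σ Finset.univ.val := by
  rw [etaPlus_eq_sortedByRank]
  have h : Multiset.map ((rankEquiv σ).symm) Finset.univ.val = Finset.univ.val := by
    have := Finset.map_univ_equiv ((rankEquiv σ).symm)
    calc Multiset.map ((rankEquiv σ).symm) Finset.univ.val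
        = (Finset.univ.map ((rankEquiv σ).symm).toEmbedding).val := rfl
      _ = Finset.univ.val := by rw [this]
  calc Multiset.map (σ ∘ (rankEquiv σ).symm) Finset.univ.val
      = Multiset.map σ (Multiset.map ((rankEquiv σ).symm) Finset.univ.val) := by
        rw [Multiset.map_map]
    _ = Multiset.map σ Finset.univ.val := by rw [h]

/-- equal etaPlus implies equal value counts -/
theorem count_eq_of_etaPlus_eq {ν μ : Fin N → ℕ} (h : etaPlus ν = etaPlus μ) (w : ℕ) :
    (Finset.univ.filter fun i => ν i = w).card = (Finset.univ.filter fun i => μ i = w).card := by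
  have hm : Multiset.map ν Finset.univ.val = Multiset.map μ Finset.univ.val := by
    rw [← multiset_etaPlus ν, ← multiset_etaPlus μ, h]
  have hcount := congrArg (Multiset.count w) hm
  rw [Multiset.count_map, Multiset.count_map] at hcount
  have e1 : ∀ f : Fin N → ℕ, Multiset.card (Multiset.filter (fun a => w = f a) Finset.univ.val)
      = (Finset.univ.filter fun i => f i = w).card := by
    intro f
    rw [Finset.card_def, Finset.filter_val]
    congr 1
    exact Multiset.filter_congr (fun x _ => eq_comm)
  rw [← e1 ν, ← e1 μ, hcount]

def etaClass (η : Fin N → ℕ) (v : ℕ) : Finset (Fin N) := Finset.univ.filter fun i => η i = v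

theorem count_chi_zero (η : Fin N → ℕ) (M : Finset (Fin N)) :
    (Finset.univ.filter fun i => η i + chiSet M i = 0).card =
      (etaClass η 0).card - (etaClass η 0 ∩ M).card := by
  have hset : (Finset.univ.filter fun i => η i + chiSet M i = 0) = etaClass η 0 \ M := by
    ext i
    simp only [Finset.mem_filter, Finset.mem_univ, true_and, etaClass, Finset.mem_sdiff, chiSet]
    by_cases hi : i ∈ M <;> simp [hi]
  rw [hset, ← Finset.sdiff_inter_self_left, Finset.card_sdiff_of_subset Finset.inter_subset_left]

theorem count_chi_succ (η : Fin N → ℕ) (M : Finset (Fin N)) (v : ℕ) :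
    (Finset.univ.filter fun i => η i + chiSet M i = v + 1).card =
      ((etaClass η (v+1)).card - (etaClass η (v+1) ∩ M).card) + (etaClass η v ∩ M).card := by
  have hset : (Finset.univ.filter fun i => η i + chiSet M i = v + 1) =
      (etaClass η (v+1) \ M) ∪ (etaClass η v ∩ M) := by
    ext i
    simp only [Finset.mem_filter, Finset.mem_univ, true_and, etaClass, Finset.mem_sdiff,
      Finset.mem_union, Finset.mem_inter]
    by_cases hi : i ∈ M <;> simp [hi, chiSet]
  have hdisj : Disjoint (etaClass η (v+1) \ M) (etaClass η v ∩ M) := by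
    rw [Finset.disjoint_left]
    intro i hi hi'
    exact (Finset.mem_sdiff.1 hi).2 (Finset.mem_inter.1 hi').2
  rw [hset, Finset.card_union_of_disjoint hdisj, ← Finset.sdiff_inter_self_left,
    Finset.card_sdiff_of_subset Finset.inter_subset_left]

/-- if η+χM and η+χM' have equal value counts then M, M' meet every class equally -/
theorem class_card_eq (η : Fin N → ℕ) (M M' : Finset (Fin N))
    (h : ∀ w, (Finset.univ.filter fun i => η i + chiSet M i = w).card =
      (Finset.univ.filter fun i => η i + chiSet M' i = w).card) (v : ℕ) :
    (etaClass η v ∩ M).card = (etaClass η v ∩ M').card := by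
  induction v with
  | zero =>
    have h0 := h 0
    rw [count_chi_zero, count_chi_zero] at h0
    have b1 : (etaClass η 0 ∩ M).card ≤ (etaClass η 0).card :=
      Finset.card_le_card Finset.inter_subset_left
    have b2 : (etaClass η 0 ∩ M').card ≤ (etaClass η 0).card :=
      Finset.card_le_card Finset.inter_subset_left
    omega
  | succ v ih =>
    have h1 := h (v+1)
    rw [count_chi_succ, count_chi_succ] at h1
    have b1 : (etaClass η (v+1) ∩ M).card ≤ (etaClass η (v+1)).card :=
      Finset.card_le_card Finset.inter_subset_left
    have b2 : (etaClass η (v+1) ∩ M').card ≤ (etaClass η (v+1)).card :=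
      Finset.card_le_card Finset.inter_subset_left
    omega

theorem prefix_class_le (η : Fin N → ℕ) (M M' : Finset (Fin N))
    (hcls : ∀ v, (etaClass η v ∩ M).card = (etaClass η v ∩ M').card)
    (hdc : ∀ i j : Fin N, η i = η j → i < j → j ∈ M' → i ∈ M') (k v : ℕ) :
    ((etaClass η v ∩ M) ∩ (Finset.univ.filter fun i : Fin N => (i : ℕ) < k)).card ≤
    ((etaClass η v ∩ M') ∩ (Finset.univ.filter fun i : Fin N => (i : ℕ) < k)).card := by
  set Pk := Finset.univ.filter fun i : Fin N => (i : ℕ) < k with hPk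
  by_cases hsub : etaClass η v ∩ Pk ⊆ M'
  · calc ((etaClass η v ∩ M) ∩ Pk).card ≤ (etaClass η v ∩ Pk).card := by
          apply Finset.card_le_card
          intro i hi
          simp only [Finset.mem_inter] at hi ⊢
          exact ⟨hi.1.1, hi.2⟩
      _ ≤ ((etaClass η v ∩ M') ∩ Pk).card := by
          apply Finset.card_le_card
          intro i hi
          have hi' := Finset.mem_inter.1 hi
          simp only [Finset.mem_inter]
          exact ⟨⟨hi'.1, hsub hi⟩, hi'.2⟩
  · rw [Finset.not_subset] at hsub
    obtain ⟨j, hj, hjM'⟩ := hsub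
    rw [Finset.mem_inter] at hj
    have hsub2 : etaClass η v ∩ M' ⊆ Pk := by
      intro i hi
      rw [Finset.mem_inter] at hi
      have hij : i < j := by
        rcases lt_trichotomy i j with h | h | h
        · exact h
        · exact absurd (h ▸ hi.2) hjM'
        · have hji : η j = η i := by
            have h1 : η i = v := by
              simpa [etaClass] using hi.1
            have h2 : η j = v := by
              simpa [etaClass] using hj.1
            rw [h1, h2]
          exact absurd (hdc j i hji h hi.2) hjM'
      have hjk : (j : ℕ) < k := by
        simpa [hPk] using hj.2
      simp only [hPk, Finset.mem_filter, Finset.mem_univ, true_and]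
      have : (i : ℕ) < (j : ℕ) := hij
      omega
    have heq2 : (etaClass η v ∩ M') ∩ Pk = etaClass η v ∩ M' := by
      apply Finset.inter_eq_left.2 hsub2
    rw [heq2, ← hcls v]
    exact Finset.card_le_card Finset.inter_subset_left

theorem prefix_count_le (η : Fin N → ℕ) (M M' : Finset (Fin N))
    (hcls : ∀ v, (etaClass η v ∩ M).card = (etaClass η v ∩ M').card)
    (hdc : ∀ i j : Fin N, η i = η j → i < j → j ∈ M' → i ∈ M') (k : ℕ) :
    ((Finset.univ.filter fun i : Fin N => (i : ℕ) < k) ∩ M).card ≤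
    ((Finset.univ.filter fun i : Fin N => (i : ℕ) < k) ∩ M').card := by
  set Pk := Finset.univ.filter fun i : Fin N => (i : ℕ) < k with hPk
  have fib : ∀ X : Finset (Fin N), (Pk ∩ X).card =
      ∑ v ∈ Finset.image η Finset.univ, ((etaClass η v ∩ X) ∩ Pk).card := by
    intro X
    rw [Finset.card_eq_sum_card_fiberwise
      (f := η) (t := Finset.image η Finset.univ)
      (fun x _ => Finset.mem_image_of_mem η (Finset.mem_univ x))]
    apply Finset.sum_congr rfl
    intro v _
    congr 1
    ext i
    simp only [Finset.mem_filter, Finset.mem_inter, etaClass, Finset.mem_univ, true_and, hPk]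
    tauto
  rw [fib M, fib M']
  exact Finset.sum_le_sum fun v _ => prefix_class_le η M M' hcls hdc k v

theorem stmt_19 (N p : ℕ) (hp : p ≤ N) (η : Fin N → ℕ) :
    (Finset.univ.filter fun i : Fin N => lprime η i < p).card = p ∧
    ∀ M : Finset (Fin N), M.card = p →
      M ≠ (Finset.univ.filter fun i : Fin N => lprime η i < p) →
      TriLT (fun i => η i + chiSet M i)
        (fun i => η i +
          chiSet (Finset.univ.filter fun i : Fin N => lprime η i < p) i) := by
  have hMstar : (Finset.univ.filter fun i : Fin N => lprime η i < p) = topset η p := by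
    ext i
    simp only [Finset.mem_filter, Finset.mem_univ, true_and, topset, lprime_eq_rank]
  constructor
  · rw [hMstar, card_topset, min_eq_left hp]
  · intro M hMp hMne
    set Mstar := Finset.univ.filter fun i : Fin N => lprime η i < p with hMs
    set ν := fun i => η i + chiSet M i with hν
    set μ := fun i => η i + chiSet Mstar i with hμ
    have h1 : DomLE (etaPlus ν) (etaPlus μ) := by
      rw [hν, hμ, hMstar]
      exact domle_key η p hp M hMp
    by_cases hEq : etaPlus ν = etaPlus μ
    · right
      refine ⟨hEq, ?_, ?_⟩
      · -- DomLE ν μ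
        have hcls := class_card_eq η M Mstar (count_eq_of_etaPlus_eq hEq)
        have hdc : ∀ i j : Fin N, η i = η j → i < j → j ∈ Mstar → i ∈ Mstar := by
          intro i j hij hlt hj
          rw [hMs, Finset.mem_filter] at hj ⊢
          refine ⟨Finset.mem_univ i, ?_⟩
          rw [lprime_eq_rank] at hj ⊢
          have : prec η i j := Or.inr ⟨hij.symm, hlt⟩
          exact lt_trans (rank_lt_rank η this) hj.2
        intro k
        rw [hν, hμ, sum_add_chi, sum_add_chi]
        have := prefix_count_le η M Mstar hcls hdc k
        omega
      · -- ν ≠ μ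
        intro hfun
        apply hMne
        ext i
        have := congrFun hfun i
        simp only [hν, hμ, chiSet] at this
        by_cases hi : i ∈ M <;> by_cases hi' : i ∈ Mstar <;>
          simp [hi, hi'] at this ⊢
    · exact Or.inl ⟨h1, hEq⟩
end
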